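/- Let E be a real Banach space, let F be a bounded subset of E, and let x belong to the closed convex hull of F. Then there is a sequence (x_n)_{n≥1} of points of F such that (1/N)·Σ_{k=1}^N x_k converges in norm to x as N → ∞. -/

import Mathlib

/-!
Averages of finite multisets from `F` are dense in the closed convex hull: they contain `F`, and
mixing two multisets with multiplicities in ratio `p : (q - p)` realises every rational convex
combination of their averages. So for every `m` there is a periodic `F`-valued sequence whose
average over one period `n m` is within `1 / (m + 1)` of `x`. Glue these sequences along blocks
`[T m, T (m + 1))` with `T (m + 1) = (m + 1) (T m + n m + n (m + 1))`. For `N` in block `m + 1`,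
the sum of the first `N` terms deviates from `N • x` by at most `C T m` (the blocks before `m`,
with `C` bounding `‖y - x‖` on `F`), plus `N / (m + 1)` from the complete periods and `C (n m +
n (m + 1))` from the two incomplete ones; the growth of `T` makes all of this `O(N / m)`.
-/

open Filter Finset Function Topology

namespace Function.Periodic

variable {M : Type*} [AddCancelCommMonoid M] {g : ℕ → M} {n : ℕ}

theorem sum_range_add (hg : Periodic g n) (a : ℕ) :
    ∑ k ∈ range n, g (a + k) = ∑ k ∈ range n, g k := by
  induction a with
  | zero => simp
  | succ a ih =>
    rw [← ih]
    refine add_right_cancel (b := g a) ?_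
    have hshift := sum_range_succ' (fun k => g (a + k)) n
    rw [sum_range_succ, add_zero, hg a] at hshift
    simpa only [add_right_comm a 1, add_assoc] using hshift.symm

theorem sum_range_mul_add (hg : Periodic g n) (a q : ℕ) :
    ∑ k ∈ range (q * n), g (a + k) = q • ∑ k ∈ range n, g k := by
  induction q with
  | zero => simp
  | succ q ih =>
    rw [Nat.succ_mul, Finset.sum_range_add, ih, succ_nsmul]
    simp only [← add_assoc, hg.sum_range_add]

end Function.Periodic

theorem Function.Periodic.norm_sum_range_add_le {E : Type*} [SeminormedAddCommGroup E]
    {g : ℕ → E} {n : ℕ} {C δ : ℝ} (hg : Periodic g n) (hn : 0 < n) (hC : ∀ k, ‖g k‖ ≤ C)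
    (hδ : ‖∑ k ∈ range n, g k‖ ≤ n * δ) (a t : ℕ) :
    ‖∑ k ∈ range t, g (a + k)‖ ≤ t * δ + n * C := by
  have hC0 : 0 ≤ C := (norm_nonneg _).trans (hC 0)
  have hδ0 : 0 ≤ δ := nonneg_of_mul_nonneg_right ((norm_nonneg _).trans hδ) (by positivity)
  have hfull : ((t / n * n : ℕ) : ℝ) ≤ t := by exact_mod_cast Nat.div_mul_le_self t n
  have hrest : ((t % n : ℕ) : ℝ) ≤ n := by exact_mod_cast (Nat.mod_lt t hn).le
  rw [← Nat.div_add_mod' t n, Finset.sum_range_add, hg.sum_range_mul_add]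
  calc ‖(t / n) • ∑ k ∈ range n, g k + ∑ k ∈ range (t % n), g (a + (t / n * n + k))‖
      ≤ (t / n : ℕ) * (n * δ) + (t % n : ℕ) * C := by
        refine (norm_add_le _ _).trans (add_le_add ?_ ?_)
        · exact norm_nsmul_le.trans (by gcongr)
        · simpa using norm_sum_le_of_le (range (t % n)) fun k _ => hC (a + (t / n * n + k))
    _ ≤ ((t / n * n + t % n : ℕ) : ℝ) * δ + n * C := by
        push_cast at hfull hrest ⊢
        nlinarith

theorem Multiset.exists_periodic_sum_range_eq {M : Type*} [AddCommMonoid M] {s : Multiset M}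
    (hs : s ≠ 0) : ∃ z : ℕ → M, Periodic z (Multiset.card s) ∧ (∀ k, z k ∈ s) ∧
      ∑ k ∈ Finset.range (Multiset.card s), z k = s.sum := by
  rw [← Multiset.length_toList, ← Multiset.sum_toList]
  have hl : 0 < s.toList.length := by simpa using Multiset.card_pos.2 hs
  refine ⟨fun k => s.toList[k % s.toList.length]'(Nat.mod_lt _ hl), fun k => by simp,
    fun k => Multiset.mem_toList.1 (List.getElem_mem _), ?_⟩
  rw [← Fin.sum_univ_getElem, Finset.sum_range]
  exact sum_congr rfl fun i _ => by simp only [Nat.mod_eq_of_lt i.isLt]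

section Averages

variable {E : Type*} [NormedAddCommGroup E] [NormedSpace ℝ E] {F : Set E}

def averages (F : Set E) : Set E :=
  {y | ∃ s : Multiset E, s ≠ 0 ∧ (∀ z ∈ s, z ∈ F) ∧ (Multiset.card s : ℝ)⁻¹ • s.sum = y}

theorem subset_averages : F ⊆ averages F :=
  fun z hz => ⟨{z}, by simp, by simpa using hz, by simp⟩

theorem ratCombination_mem_averages {a b : E} (ha : a ∈ averages F) (hb : b ∈ averages F)
    {p q : ℕ} (hpq : p ≤ q) (hq : 0 < q) :
    ((p : ℝ) / q) • a + (1 - (p : ℝ) / q) • b ∈ averages F := by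
  obtain ⟨s, hs0, hsF, rfl⟩ := ha
  obtain ⟨t, ht0, htF, rfl⟩ := hb
  have hs : (0 : ℝ) < Multiset.card s := by exact_mod_cast Multiset.card_pos.2 hs0
  have ht : (0 : ℝ) < Multiset.card t := by exact_mod_cast Multiset.card_pos.2 ht0
  refine ⟨(p * Multiset.card t) • s + ((q - p) * Multiset.card s) • t, ?_, ?_, ?_⟩
  · simp only [ne_eq, add_eq_zero, smul_eq_zero, mul_eq_zero, Multiset.card_eq_zero, hs0, ht0,
      or_false]
    omega
  · intro z hz
    rcases Multiset.mem_add.1 hz with hz | hz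
    · exact hsF z (Multiset.mem_of_mem_nsmul hz)
    · exact htF z (Multiset.mem_of_mem_nsmul hz)
  · simp only [Multiset.card_add, Multiset.card_nsmul, Multiset.sum_add, Multiset.sum_nsmul]
    rw [← Nat.cast_smul_eq_nsmul ℝ, ← Nat.cast_smul_eq_nsmul ℝ]
    push_cast [hpq]
    have hqR : (0 : ℝ) < q := by exact_mod_cast hq
    match_scalars <;> field_simp [hqR.ne', hs.ne', ht.ne'] <;> ring

theorem convex_closure_averages : Convex ℝ (closure (averages F)) := by
  have hcombo : ∀ a ∈ averages F, ∀ b ∈ averages F, ∀ t ∈ Set.Icc (0 : ℝ) 1,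
      t • a + (1 - t) • b ∈ closure (averages F) := by
    intro a ha b hb t ht
    have hratio : Tendsto (fun q : ℕ => (⌊t * q⌋₊ : ℝ) / q) atTop (𝓝 t) :=
      (tendsto_nat_floor_mul_div_atTop ht.1).comp tendsto_natCast_atTop_atTop
    refine mem_closure_of_tendsto
      ((hratio.smul_const a).add ((tendsto_const_nhds.sub hratio).smul_const b)) ?_
    filter_upwards [eventually_gt_atTop 0] with q hq
    refine ratCombination_mem_averages ha hb (Nat.floor_le_of_le ?_) hq
    exact mul_le_of_le_one_left q.cast_nonneg ht.2
  intro x hx y hy a b ha hb hab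
  obtain rfl : b = 1 - a := by linarith
  simpa only [closure_closure] using map_mem_closure₂ (f := fun u v => a • u + (1 - a) • v)
    (by fun_prop) hx hy fun u hu v hv => hcombo u hu v hv a ⟨ha, by linarith⟩

theorem closure_convexHull_subset_closure_averages :
    closure (convexHull ℝ F) ⊆ closure (averages F) :=
  closure_minimal (convexHull_min (subset_averages.trans subset_closure) convex_closure_averages)
    isClosed_closure

theorem exists_periodic_norm_sum_sub_le {x : E} (hx : x ∈ closure (convexHull ℝ F)) {ε : ℝ}
    (hε : 0 < ε) : ∃ n, 0 < n ∧ ∃ z : ℕ → E, Periodic z n ∧ (∀ k, z k ∈ F) ∧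
      ‖∑ k ∈ range n, (z k - x)‖ ≤ n * ε := by
  obtain ⟨_, ⟨s, hs0, hsF, rfl⟩, hxy⟩ :=
    Metric.mem_closure_iff.1 (closure_convexHull_subset_closure_averages hx) ε hε
  obtain ⟨z, hz, hzs, hsum⟩ := Multiset.exists_periodic_sum_range_eq hs0
  have hs : (Multiset.card s : ℝ) ≠ 0 := Nat.cast_ne_zero.2 (Multiset.card_pos.2 hs0).ne'
  refine ⟨_, Multiset.card_pos.2 hs0, z, hz, fun k => hsF _ (hzs k), ?_⟩
  rw [sum_sub_distrib, hsum, sum_const, card_range, ← Nat.cast_smul_eq_nsmul ℝ,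
    ← smul_inv_smul₀ hs s.sum, ← smul_sub, norm_smul, Real.norm_natCast, ← dist_eq_norm,
    dist_comm]
  gcongr

end Averages

def blockIndex (T : ℕ → ℕ) (k : ℕ) : ℕ :=
  Nat.findGreatest (fun m => T m ≤ k) k

section BlockIndex

variable {T : ℕ → ℕ} {k m : ℕ}

theorem apply_blockIndex_le (h0 : T 0 = 0) (k : ℕ) : T (blockIndex T k) ≤ k :=
  Nat.findGreatest_spec (P := fun m => T m ≤ k) (Nat.zero_le k) (by simp [h0])

theorem le_blockIndex (hT : StrictMono T) (h : T m ≤ k) : m ≤ blockIndex T k :=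
  Nat.le_findGreatest ((hT.id_le m).trans h) h

theorem lt_apply_blockIndex_succ (hT : StrictMono T) (k : ℕ) : k < T (blockIndex T k + 1) := by
  by_contra! h
  simpa using le_blockIndex hT h

theorem blockIndex_eq (h0 : T 0 = 0) (hT : StrictMono T) (hk : k ∈ Set.Ico (T m) (T (m + 1))) :
    blockIndex T k = m := by
  refine le_antisymm ?_ (le_blockIndex hT hk.1)
  by_contra! h
  exact (hk.2.trans_le ((hT.monotone h).trans (apply_blockIndex_le h0 k))).false

theorem tendsto_blockIndex_atTop (hT : StrictMono T) : Tendsto (blockIndex T) atTop atTop :=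
  tendsto_atTop_atTop.2 fun m => ⟨T m, fun _ hk => le_blockIndex hT hk⟩

end BlockIndex

def blockStart (n : ℕ → ℕ) : ℕ → ℕ
  | 0 => 0
  | m + 1 => (m + 1) * (blockStart n m + n m + n (m + 1))

section Gluing

variable {E : Type*} [SeminormedAddCommGroup E] {g : ℕ → ℕ → E} {n : ℕ → ℕ} {C : ℝ} {m : ℕ}

theorem strictMono_blockStart (hn : ∀ m, 0 < n m) : StrictMono (blockStart n) :=
  strictMono_nat_of_lt_succ fun m => by
    have := hn m
    calc blockStart n m < blockStart n m + n m + n (m + 1) := by omega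
      _ ≤ blockStart n (m + 1) := Nat.le_mul_of_pos_left _ m.succ_pos

variable (hn : ∀ m, 0 < n m) (hg : ∀ m, Periodic (g m) (n m)) (hC : ∀ m k, ‖g m k‖ ≤ C)
  (hδ : ∀ m, ‖∑ k ∈ range (n m), g m k‖ ≤ n m * (m + 1 : ℝ)⁻¹)
include hn hg hC hδ

theorem norm_sum_Ico_glued_le {a b : ℕ} (hab : a ≤ b) (ha : blockStart n m ≤ a)
    (hb : b ≤ blockStart n (m + 1)) :
    ‖∑ k ∈ Ico a b, g (blockIndex (blockStart n) k) k‖ ≤ (b - a) / (m + 1) + n m * C := by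
  have hT := strictMono_blockStart hn
  have hblock : ∀ k ∈ Ico a b, g (blockIndex (blockStart n) k) k = g m k := fun k hk => by
    rw [blockIndex_eq rfl hT ⟨ha.trans (mem_Ico.1 hk).1, (mem_Ico.1 hk).2.trans_le hb⟩]
  rw [sum_congr rfl hblock, sum_Ico_eq_sum_range, ← Nat.cast_sub hab, div_eq_mul_inv]
  exact (hg m).norm_sum_range_add_le (hn m) (hC m) (hδ m) a (b - a)

theorem norm_sum_range_glued_le {N : ℕ} (h₁ : blockStart n (m + 1) ≤ N)
    (h₂ : N ≤ blockStart n (m + 2)) :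
    ‖∑ k ∈ range N, g (blockIndex (blockStart n) k) k‖ ≤ (C + 1) * N / (m + 1) := by
  have h₀ : blockStart n m ≤ blockStart n (m + 1) := (strictMono_blockStart hn).monotone m.le_succ
  have hmid := norm_sum_Ico_glued_le hn hg hC hδ h₀ le_rfl le_rfl
  have htail := norm_sum_Ico_glued_le hn hg hC hδ h₁ le_rfl h₂
  set T := blockStart n
  push_cast at htail
  have hC0 : 0 ≤ C := (norm_nonneg _).trans (hC 0 0)
  have hstart : ((m + 1 : ℕ) : ℝ) * (T m + n m + n (m + 1) : ℕ) = T (m + 1) := by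
    exact_mod_cast rfl
  have hhead : ‖∑ k ∈ range (T m), g (blockIndex T k) k‖ ≤ T m * C := by
    simpa using norm_sum_le_of_le (range (T m)) fun k _ => hC (blockIndex T k) k
  have htail' : ((N : ℝ) - T (m + 1)) / (m + 1 + 1) ≤ (N - T (m + 1)) / (m + 1) :=
    div_le_div_of_nonneg_left (sub_nonneg.2 (by exact_mod_cast h₁)) (by positivity) (by linarith)
  rw [← sum_range_add_sum_Ico _ (h₀.trans h₁), ← sum_Ico_consecutive _ h₀ h₁]
  calc _ ≤ T m * C + (((T (m + 1) : ℝ) - T m) / (m + 1) + n m * C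
          + (((N : ℝ) - T (m + 1)) / (m + 1) + n (m + 1) * C)) :=
        (norm_add_le _ _).trans (add_le_add hhead ((norm_add_le _ _).trans (by linarith)))
    _ = C * (T (m + 1) / (m + 1)) + (N - T m) / (m + 1) := by
        rw [← hstart]; push_cast; field_simp; ring
    _ ≤ (C + 1) * N / (m + 1) := by
        have : (T (m + 1) : ℝ) ≤ N := by exact_mod_cast h₁
        rw [add_mul, add_div, mul_div_assoc, one_mul]
        gcongr
        exact sub_le_self _ (Nat.cast_nonneg _)

theorem tendsto_cesaro_glued [NormedSpace ℝ E] :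
    Tendsto (fun N : ℕ => (N : ℝ)⁻¹ • ∑ k ∈ range N, g (blockIndex (blockStart n) k) k)
      atTop (𝓝 0) := by
  have hT := strictMono_blockStart hn
  refine squeeze_zero_norm' ?_
    ((tendsto_const_div_atTop_nhds_zero_nat (C + 1)).comp (tendsto_blockIndex_atTop hT))
  filter_upwards [eventually_ge_atTop (blockStart n 1)] with N hN
  obtain ⟨m, hm⟩ : ∃ m, blockIndex (blockStart n) N = m + 1 :=
    Nat.exists_eq_add_one.2 (le_blockIndex hT hN)
  have hN0 : (0 : ℝ) < N := by exact_mod_cast (hT zero_lt_one).trans_le hN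
  have hsum := norm_sum_range_glued_le hn hg hC hδ (m := m) (N := N)
    (hm ▸ apply_blockIndex_le rfl N) (by simpa only [hm] using (lt_apply_blockIndex_succ hT N).le)
  rw [norm_smul, norm_inv, Real.norm_natCast, comp_apply, hm]
  calc (N : ℝ)⁻¹ * _ ≤ (N : ℝ)⁻¹ * ((C + 1) * N / (m + 1)) := by gcongr
    _ = (C + 1) / ((m + 1 : ℕ) : ℝ) := by push_cast; field_simp

end Gluing

theorem tendsto_cesaro_of_tendsto_cesaro_sub {E : Type*} [NormedAddCommGroup E] [NormedSpace ℝ E]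
    {u : ℕ → E} {x : E}
    (h : Tendsto (fun N : ℕ => (N : ℝ)⁻¹ • ∑ k ∈ range N, (u k - x)) atTop (𝓝 0)) :
    Tendsto (fun N : ℕ => (N : ℝ)⁻¹ • ∑ k ∈ range N, u k) atTop (𝓝 x) := by
  refine (zero_add x ▸ h.add_const x).congr' ?_
  filter_upwards [eventually_ne_atTop 0] with N hN
  rw [sum_sub_distrib, sum_const, card_range, ← Nat.cast_smul_eq_nsmul ℝ, smul_sub,
    inv_smul_smul₀ (Nat.cast_ne_zero.2 hN), sub_add_cancel]

theorem stmt4_general {E : Type*} [NormedAddCommGroup E] [NormedSpace ℝ E]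
    (F : Set E) (hF : Bornology.IsBounded F)
    (x : E) (hx : x ∈ closure (convexHull ℝ F)) :
    ∃ seq : ℕ → E, (∀ n, seq n ∈ F) ∧
      Tendsto (fun N : ℕ => (N : ℝ)⁻¹ • (∑ k ∈ Finset.range N, seq k))
        atTop (nhds x) := by
  obtain ⟨M, hM⟩ := isBounded_iff_forall_norm_le.1 hF
  choose n hn z hz hzF hzx using fun m : ℕ =>
    exists_periodic_norm_sum_sub_le hx (ε := (m + 1 : ℝ)⁻¹) (by positivity)
  refine ⟨fun k => z (blockIndex (blockStart n) k) k, fun k => hzF _ k, ?_⟩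
  refine tendsto_cesaro_of_tendsto_cesaro_sub (tendsto_cesaro_glued (C := M + ‖x‖) hn
    (fun m k => congrArg (· - x) (hz m k)) (fun m k => ?_) hzx)
  exact (norm_sub_le _ _).trans (add_le_add_left (hM _ (hzF m k)) _)

/-- Let `E` be a real Banach space, `F` a bounded subset of
`E` and `x` a point of the closed convex hull of `F`.  Then there is a
sequence `(x_n)` of points of `F` which is Cesàro summable to `x`, i.e. whose
arithmetic means converge in norm to `x`. -/
theorem stmt4 {E : Type*} [NormedAddCommGroup E] [NormedSpace ℝ E] [CompleteSpace E]
    (F : Set E) (hF : Bornology.IsBounded F)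
    (x : E) (hx : x ∈ closure (convexHull ℝ F)) :
    ∃ seq : ℕ → E, (∀ n, seq n ∈ F) ∧
      Tendsto (fun N : ℕ => (N : ℝ)⁻¹ • (∑ k ∈ Finset.range N, seq k))
        atTop (nhds x) :=
  stmt4_general F hF x hx
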